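/- arXiv:2511.18418 — 8 statements merged into one kernel-verified Lean document; each statement's English description precedes it below -/
import Mathlib

section
/- Let S be a nonempty finite set and P : S × S → ℝ a row-stochastic matrix (P(s,s') ≥ 0 for all s,s' and Σ_{s'} P(s,s') = 1 for all s) such that every state can be reached from every other state in finitely many steps through transitions of positive probability. For each s ∈ S set R_s = Σ_{g ∈ G{s}} ∏_{x ∈ S∖{s}} P(x, g(x)), where G{s} denotes the set of {s}-graphs on S. Then Σ_{s∈S} R_s > 0, and the vector π defined by π_s = R_s / Σ_{s'∈S} R_{s'} is the unique stationary distribution of P: π_s ≥ 0 for all s, Σ_s π_s = 1, and Σ_s π_s P(s,s') = π_{s'} for every s' ∈ S. -/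
/-!
Markov chain tree theorem. Adding to an `{r}`-graph the edge `r → s` (for `r ≠ s`), or to an
`{s}`-graph an edge `s → t` (for `t ≠ s`), produces in both cases exactly the fixed-point-free
functional graphs whose unique cycle passes through `s`, each once: the inverse cuts the edge of
the cycle entering, resp. leaving, `s`. Comparing weights gives the balance equation
`∑_{r ≠ s} R_r P(r,s) = R_s ∑_{t ≠ s} P(s,t)`, i.e. `R` is stationary. Every `R_s` is positive
because first steps of shortest paths to `s` form an `{s}`-graph with positive edges. Uniqueness:
if `q` is stationary and `c` is the largest constant with `c R ≤ q`, then `q - c R` is a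
nonnegative stationary vector with a zero, and irreducibility spreads the zero everywhere.
-/

attribute [local instance] Classical.propDecidable

/-- The Freidlin–Wentzell weight of a state `s`: the sum over all `{s}`-graphs `g`
(functions on `S \ {s}`, normalized here by `g s = s`, with no fixed points off `s`
and all iterates eventually reaching `s`) of the product of the transition
probabilities `P x (g x)` along the edges of the graph. -/
noncomputable def graphWeight {S : Type*} [Fintype S] [DecidableEq S]
    (P : S → S → ℝ) (s : S) : ℝ :=
  ∑ g ∈ Finset.univ.filter
      (fun g : S → S => g s = s ∧ ∀ x, x ≠ s → (g x ≠ x ∧ ∃ n : ℕ, g^[n] x = s)),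
    ∏ x ∈ Finset.univ.erase s, P x (g x)

open Finset Function

section Iterates

variable {α : Type*}

theorem exists_iterate_eq_of_eq_off {f g : α → α} {a : α} (hfg : ∀ x, x ≠ a → f x = g x) :
    ∀ {n : ℕ} {x : α}, f^[n] x = a → ∃ m, g^[m] x = a
  | 0, _, hx => ⟨0, hx⟩
  | n + 1, x, hx => by
    by_cases hxa : x = a
    · exact ⟨0, hxa⟩
    · rw [iterate_succ_apply, hfg x hxa] at hx
      obtain ⟨m, hm⟩ := exists_iterate_eq_of_eq_off hfg hx
      exact ⟨m + 1, hm⟩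

noncomputable def cyclePred (f : α → α) (x : α) : α :=
  f^[minimalPeriod f x - 1] x

theorem apply_cyclePred {f : α → α} {x : α} (hx : x ∈ periodicPts f) :
    f (cyclePred f x) = x := by
  rw [cyclePred, ← iterate_succ_apply' f, Nat.succ_eq_add_one,
    Nat.sub_add_cancel (minimalPeriod_pos_of_mem_periodicPts hx), iterate_minimalPeriod]

theorem cyclePred_eq {f : α → α} {x y : α} {m : ℕ} (hy : f y = x) (hxy : f^[m] x = y) :
    cyclePred f x = y := by
  have hper : IsPeriodicPt f (m + 1) x := by
    rw [IsPeriodicPt, IsFixedPt, iterate_succ_apply', hxy, hy]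
  have hpos := hper.minimalPeriod_pos m.succ_pos
  obtain ⟨k, hk⟩ := hper.minimalPeriod_dvd
  set p := minimalPeriod f x
  have hm : m = p - 1 + p * (k - 1) := by
    rcases k with _ | k
    · omega
    · rw [Nat.mul_succ] at hk
      simp only [Nat.add_sub_cancel]
      omega
  rw [← hxy, cyclePred, ← iterate_mod_minimalPeriod_eq (n := m), hm,
    Nat.add_mul_mod_self_left, Nat.mod_eq_of_lt (by omega)]

end Iterates

section FunctionalGraphs

variable {S : Type*} [Fintype S] [DecidableEq S]

noncomputable def rootedGraphs (s : S) : Finset (S → S) :=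
  univ.filter fun g => g s = s ∧ ∀ x, x ≠ s → (g x ≠ x ∧ ∃ n : ℕ, g^[n] x = s)

/-- The loopless functional graphs whose unique cycle passes through `s`. -/
noncomputable def unicyclicGraphs (s : S) : Finset (S → S) :=
  univ.filter fun h => (∀ x, h x ≠ x) ∧ (∀ x, ∃ n : ℕ, h^[n] x = s) ∧ s ∈ periodicPts h

theorem graphWeight_eq_sum_rootedGraphs (P : S → S → ℝ) (s : S) :
    graphWeight P s = ∑ g ∈ rootedGraphs s, ∏ x ∈ univ.erase s, P x (g x) :=
  rfl

theorem mem_rootedGraphs {s : S} {g : S → S} :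
    g ∈ rootedGraphs s ↔ g s = s ∧ ∀ x, x ≠ s → (g x ≠ x ∧ ∃ n : ℕ, g^[n] x = s) := by
  simp [rootedGraphs]

theorem mem_unicyclicGraphs {s : S} {h : S → S} :
    h ∈ unicyclicGraphs s ↔
      (∀ x, h x ≠ x) ∧ (∀ x, ∃ n : ℕ, h^[n] x = s) ∧ s ∈ periodicPts h := by
  simp [unicyclicGraphs]

theorem mem_unicyclicGraphs_iterate {s : S} {h : S → S} (hh : h ∈ unicyclicGraphs s) (k : ℕ) :
    h ∈ unicyclicGraphs (h^[k] s) := by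
  obtain ⟨hfix, hreach, hper⟩ := mem_unicyclicGraphs.1 hh
  obtain ⟨n, hn, hpern⟩ := mem_periodicPts.1 hper
  refine mem_unicyclicGraphs.2 ⟨hfix, fun x => ?_, mk_mem_periodicPts hn (hpern.apply_iterate k)⟩
  obtain ⟨m, hm⟩ := hreach x
  exact ⟨k + m, by rw [iterate_add_apply, hm]⟩

theorem mem_unicyclicGraphs_cyclePred {s : S} {h : S → S} (hh : h ∈ unicyclicGraphs s) :
    h ∈ unicyclicGraphs (cyclePred h s) :=
  mem_unicyclicGraphs_iterate hh _

theorem update_mem_unicyclicGraphs {s t : S} {g : S → S} (hg : g ∈ rootedGraphs s)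
    (ht : t ≠ s) : update g s t ∈ unicyclicGraphs s := by
  obtain ⟨-, hg⟩ := mem_rootedGraphs.1 hg
  have hreach : ∀ x, ∃ n : ℕ, (update g s t)^[n] x = s := fun x =>
    if hx : x = s then ⟨0, hx⟩
    else exists_iterate_eq_of_eq_off (fun y hy => (update_of_ne hy _ _).symm)
      (hg x hx).2.choose_spec
  refine mem_unicyclicGraphs.2 ⟨fun x => ?_, hreach, ?_⟩
  · by_cases hx : x = s
    · rw [hx, update_self]
      exact ht
    · rw [update_of_ne hx]
      exact (hg x hx).1
  · obtain ⟨m, hm⟩ := hreach t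
    exact mk_mem_periodicPts m.succ_pos (by rw [IsPeriodicPt, IsFixedPt, iterate_succ_apply,
      update_self, hm])

theorem update_self_mem_rootedGraphs {s : S} {h : S → S} (hh : h ∈ unicyclicGraphs s) :
    update h s s ∈ rootedGraphs s := by
  obtain ⟨hfix, hreach, -⟩ := mem_unicyclicGraphs.1 hh
  refine mem_rootedGraphs.2 ⟨update_self _ _ _, fun x hx => ⟨?_, ?_⟩⟩
  · rw [update_of_ne hx]
    exact hfix x
  · exact exists_iterate_eq_of_eq_off (fun y hy => (update_of_ne hy _ _).symm)
      (hreach x).choose_spec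

theorem prod_update_eq {R : Type*} [CommMonoid R] (P : S → S → R) (g : S → S) (s t : S) :
    ∏ x, P x (update g s t x) = (∏ x ∈ univ.erase s, P x (g x)) * P s t := by
  rw [← mul_prod_erase univ _ (mem_univ s), update_self, mul_comm]
  congr 1
  exact prod_congr rfl fun x hx => by rw [update_of_ne (ne_of_mem_erase hx)]

end FunctionalGraphs

section GraphWeight

variable {S : Type*} [Fintype S] [DecidableEq S] (P : S → S → ℝ)

theorem graphWeight_outflow_eq_sum_unicyclicGraphs (s : S) :
    ∑ t ∈ univ.erase s, graphWeight P s * P s t = ∑ h ∈ unicyclicGraphs s, ∏ x, P x (h x) := by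
  simp_rw [graphWeight_eq_sum_rootedGraphs, sum_mul]
  rw [sum_sigma']
  refine sum_bij' (fun p _ => update p.2 s p.1) (fun h _ => ⟨h s, update h s s⟩)
    (fun p hp => ?_) (fun h hh => ?_) (fun p hp => ?_) (fun h _ => ?_) (fun p _ => ?_)
  · obtain ⟨ht, hg⟩ := mem_sigma.1 hp
    exact update_mem_unicyclicGraphs hg (ne_of_mem_erase ht)
  · exact mem_sigma.2 ⟨mem_erase.2 ⟨(mem_unicyclicGraphs.1 hh).1 s, mem_univ _⟩,
      update_self_mem_rootedGraphs hh⟩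
  · obtain ⟨-, hg⟩ := mem_sigma.1 hp
    refine Sigma.ext (update_self _ _ _) (heq_of_eq ?_)
    rw [update_idem, update_eq_self_iff, (mem_rootedGraphs.1 hg).1]
  · simp only [update_idem, update_eq_self]
  · exact (prod_update_eq P _ _ _).symm

theorem graphWeight_inflow_eq_sum_unicyclicGraphs (s : S) :
    ∑ r ∈ univ.erase s, graphWeight P r * P r s = ∑ h ∈ unicyclicGraphs s, ∏ x, P x (h x) := by
  simp_rw [graphWeight_eq_sum_rootedGraphs, sum_mul]
  rw [sum_sigma']
  refine sum_bij' (fun p _ => update p.2 p.1 s)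
    (fun h _ => ⟨cyclePred h s, update h (cyclePred h s) (cyclePred h s)⟩)
    (fun p hp => ?_) (fun h hh => ?_) (fun p hp => ?_) (fun h hh => ?_) (fun p _ => ?_)
  · obtain ⟨hr, hg⟩ := mem_sigma.1 hp
    simpa using mem_unicyclicGraphs_iterate
      (update_mem_unicyclicGraphs hg (ne_of_mem_erase hr).symm) 1
  · obtain ⟨hfix, -, hper⟩ := mem_unicyclicGraphs.1 hh
    have hpred : cyclePred h s ≠ s := fun he => hfix s <| by
      simpa only [he] using apply_cyclePred hper
    exact mem_sigma.2 ⟨mem_erase.2 ⟨hpred, mem_univ _⟩,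
      update_self_mem_rootedGraphs (mem_unicyclicGraphs_cyclePred hh)⟩
  · obtain ⟨hr, hg⟩ := mem_sigma.1 hp
    obtain ⟨-, hreach, -⟩ :=
      mem_unicyclicGraphs.1 (update_mem_unicyclicGraphs hg (ne_of_mem_erase hr).symm)
    have hpred : cyclePred (update p.2 p.1 s) s = p.1 :=
      cyclePred_eq (update_self _ _ _) (hreach s).choose_spec
    refine Sigma.ext hpred (heq_of_eq ?_)
    rw [hpred, update_idem, update_eq_self_iff, (mem_rootedGraphs.1 hg).1]
  · rw [update_idem, update_eq_self_iff, apply_cyclePred (mem_unicyclicGraphs.1 hh).2.2]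
  · exact (prod_update_eq P _ _ _).symm

theorem sum_graphWeight_mul (hrow : ∀ s, ∑ t, P s t = 1) (s : S) :
    ∑ r, graphWeight P r * P r s = graphWeight P s :=
  calc ∑ r, graphWeight P r * P r s
      = graphWeight P s * P s s + ∑ r ∈ univ.erase s, graphWeight P r * P r s :=
        (add_sum_erase _ _ (mem_univ s)).symm
    _ = graphWeight P s * P s s + ∑ t ∈ univ.erase s, graphWeight P s * P s t := by
        rw [graphWeight_inflow_eq_sum_unicyclicGraphs, graphWeight_outflow_eq_sum_unicyclicGraphs]
    _ = graphWeight P s := by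
        rw [← mul_sum, ← mul_add, add_sum_erase _ _ (mem_univ s), hrow, mul_one]

end GraphWeight

section Positivity

variable {S : Type*}

def ReachesIn (r : S → S → Prop) (s : S) : ℕ → S → Prop
  | 0, x => x = s
  | n + 1, x => ∃ y, r x y ∧ ReachesIn r s n y

theorem Relation.TransGen.exists_reachesIn {r : S → S → Prop} {x s : S}
    (h : Relation.TransGen r x s) : ∃ n, ReachesIn r s n x := by
  induction h using Relation.TransGen.head_induction_on with
  | single hxs => exact ⟨1, _, hxs, rfl⟩
  | head hxy _ ih =>
    obtain ⟨n, hn⟩ := ih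
    exact ⟨n + 1, _, hxy, hn⟩

variable [Fintype S] [DecidableEq S]

theorem exists_mem_rootedGraphs_of_reachesIn {r : S → S → Prop} {s : S}
    (hr : ∀ x, ∃ n, ReachesIn r s n x) :
    ∃ g ∈ rootedGraphs s, ∀ x, x ≠ s → r x (g x) := by
  let d : S → ℕ := fun x => Nat.find (hr x)
  have hstep : ∀ x, x ≠ s → ∃ y, r x y ∧ d y < d x := by
    intro x hx
    obtain ⟨k, hk⟩ : ∃ k, d x = k + 1 := Nat.exists_eq_succ_of_ne_zero fun h0 => hx <| by
      simpa only [ReachesIn, d, h0] using Nat.find_spec (hr x)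
    obtain ⟨y, hxy, hy⟩ : ReachesIn r s (k + 1) x := hk ▸ Nat.find_spec (hr x)
    exact ⟨y, hxy, (Nat.find_le hy).trans_lt (by omega)⟩
  choose! next hnext hlt using hstep
  have hreach : ∀ x, ∃ n : ℕ, (update next s s)^[n] x = s := by
    intro x
    induction x using (measure d).wf.induction with
    | h x ih =>
      by_cases hx : x = s
      · exact ⟨0, hx⟩
      · obtain ⟨n, hn⟩ := ih (next x) (hlt x hx)
        exact ⟨n + 1, by rw [iterate_succ_apply, update_of_ne hx, hn]⟩
  refine ⟨update next s s, mem_rootedGraphs.2 ⟨update_self _ _ _, fun x hx => ⟨?_, ?_⟩⟩,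
    fun x hx => ?_⟩
  · rw [update_of_ne hx]
    exact fun he => (hlt x hx).ne (congrArg d he)
  · exact hreach x
  · rw [update_of_ne hx]
    exact hnext x hx

theorem graphWeight_pos (P : S → S → ℝ) (hnn : ∀ s s', 0 ≤ P s s') (s : S)
    (hirr : ∀ x, x ≠ s → Relation.TransGen (fun x y => 0 < P x y) x s) :
    0 < graphWeight P s := by
  obtain ⟨g, hg, hpos⟩ := exists_mem_rootedGraphs_of_reachesIn fun x =>
    if hx : x = s then ⟨0, hx⟩ else (hirr x hx).exists_reachesIn
  rw [graphWeight_eq_sum_rootedGraphs]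
  exact (prod_pos fun x hx => hpos x (ne_of_mem_erase hx)).trans_le
    (single_le_sum (fun g _ => prod_nonneg fun x _ => hnn x (g x)) hg)

end Positivity

section Stationary

variable {S : Type*} [Fintype S] {P : S → S → ℝ}

theorem eq_zero_of_stationary_of_transGen (hnn : ∀ s s', 0 ≤ P s s') {q : S → ℝ}
    (hq0 : ∀ s, 0 ≤ q s) (hq : ∀ s', ∑ s, q s * P s s' = q s') {x s : S} (hs : q s = 0)
    (hxs : Relation.TransGen (fun x y => 0 < P x y) x s) : q x = 0 := by
  have hback : ∀ x z, 0 < P x z → q z = 0 → q x = 0 := fun x z hxz hz =>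
    have hsum : ∑ s, q s * P s z = 0 := by rw [hq z, hz]
    (mul_eq_zero.1 ((sum_eq_zero_iff_of_nonneg fun s _ => mul_nonneg (hq0 s) (hnn s z)).1
      hsum x (mem_univ x))).resolve_right hxz.ne'
  induction hxs using Relation.TransGen.head_induction_on with
  | single hxs => exact hback _ _ hxs hs
  | head hxy _ ih => exact hback _ _ hxy ih

theorem exists_eq_mul_of_stationary [Nonempty S] (hnn : ∀ s s', 0 ≤ P s s')
    (hirr : ∀ s s', s ≠ s' → Relation.TransGen (fun x y => 0 < P x y) s s')
    {π q : S → ℝ} (hπ0 : ∀ s, 0 < π s) (hπ : ∀ s', ∑ s, π s * P s s' = π s')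
    (hq : ∀ s', ∑ s, q s * P s s' = q s') :
    ∃ c, ∀ s, q s = c * π s := by
  obtain ⟨s₀, -, hmin⟩ := exists_min_image univ (fun s => q s / π s) univ_nonempty
  set c := q s₀ / π s₀
  refine ⟨c, fun s => ?_⟩
  have hv0 : ∀ s, 0 ≤ q s - c * π s := fun s =>
    sub_nonneg.2 ((le_div_iff₀ (hπ0 s)).1 (hmin s (mem_univ s)))
  have hv : ∀ s', ∑ s, (q s - c * π s) * P s s' = q s' - c * π s' := fun s' => by
    simp only [sub_mul, mul_assoc, sum_sub_distrib, ← mul_sum, hq, hπ]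
  have hvs₀ : q s₀ - c * π s₀ = 0 := by rw [div_mul_cancel₀ _ (hπ0 s₀).ne', sub_self]
  by_cases hs : s = s₀
  · rw [hs, ← sub_eq_zero, hvs₀]
  · exact sub_eq_zero.1 (eq_zero_of_stationary_of_transGen hnn hv0 hv hvs₀ (hirr s s₀ hs))

end Stationary

/-- Lemma 6.3.1 of Freidlin–Wentzell: for an irreducible row-stochastic matrix `P`
on a nonempty finite set, `π s = R s / ∑ R` (with `R` the `{s}`-graph weights) is
the unique stationary distribution. -/
theorem stmt0 {S : Type*} [Fintype S] [DecidableEq S] [Nonempty S]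
    (P : S → S → ℝ)
    (hnn : ∀ s s', 0 ≤ P s s')
    (hrow : ∀ s, ∑ s', P s s' = 1)
    (hirr : ∀ s s', s ≠ s' → Relation.TransGen (fun x y => 0 < P x y) s s') :
    0 < (∑ s, graphWeight P s) ∧
    (∀ s, 0 ≤ graphWeight P s / ∑ s', graphWeight P s') ∧
    (∑ s, graphWeight P s / ∑ s', graphWeight P s') = 1 ∧
    (∀ s', ∑ s, (graphWeight P s / ∑ s'', graphWeight P s'') * P s s'
        = graphWeight P s' / ∑ s'', graphWeight P s'') ∧
    (∀ q : S → ℝ, (∀ s, 0 ≤ q s) → (∑ s, q s = 1) →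
      (∀ s', ∑ s, q s * P s s' = q s') →
      ∀ s, q s = graphWeight P s / ∑ s', graphWeight P s') := by
  have hpos : ∀ s, 0 < graphWeight P s := fun s => graphWeight_pos P hnn s fun x hx => hirr x s hx
  set T := ∑ s, graphWeight P s
  have hT : 0 < T := sum_pos (fun s _ => hpos s) univ_nonempty
  have hsum : ∑ s, graphWeight P s / T = 1 := by rw [← sum_div, div_self hT.ne']
  have hstat : ∀ s', ∑ s, graphWeight P s / T * P s s' = graphWeight P s' / T := fun s' => by
    simp only [div_mul_eq_mul_div, ← sum_div, sum_graphWeight_mul P hrow]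
  refine ⟨hT, fun s => (div_pos (hpos s) hT).le, hsum, hstat, fun q _ hq1 hq => ?_⟩
  obtain ⟨c, hc⟩ := exists_eq_mul_of_stationary hnn hirr (fun s => div_pos (hpos s) hT) hstat hq
  have hc1 : c = 1 := by
    rw [← hq1, ← mul_one c, ← hsum, mul_sum]
    exact sum_congr rfl fun s _ => (hc s).symm
  simpa only [hc1, one_mul] using hc
end

section
/- Let S be a nonempty finite set and S_r ⊆ S a nonempty subset. For each s ∈ S let G_s be a nonempty finite set, and for each g ∈ G_s let γ_{s,g} ∈ (0,1) be a constant and r_{s,g} : (0,∞) → [0,∞) a function. Define R_s(ε) = Σ_{g∈G_s} γ_{s,g}·exp(−r_{s,g}(ε)), π_s(ε) = R_s(ε) / Σ_{s'∈S} R_{s'}(ε), and r*_s(ε) = min_{g∈G_s} r_{s,g}(ε). If for every s ∈ S_r and every s' ∈ S ∖ S_r one has r*_{s'}(ε) − r*_s(ε) → +∞ as ε → 0+, then Σ_{s∈S_r} π_s(ε) → 1 as ε → 0+. -/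
/-!
Each `R_s(ε)` is squeezed between constant multiples of `exp (-r*_s(ε))`: the minimising graph
gives the lower bound, and every graph contributes at most `γ_{s,g} · exp (-r*_s(ε))`. Hence for
`s ∈ Sr` and `s' ∉ Sr` the ratio `R_{s'}(ε) / R_s(ε)` is at most a constant times
`exp (-(r*_{s'}(ε) - r*_s(ε))) → 0`. The mass `π_{s'}(ε)` outside `Sr` is bounded by that ratio,
so it vanishes in the limit and the mass on `Sr` tends to `1`.
-/

open Filter Finset Real Topology

section WeightedExpSum

variable {κ : Type*} [Fintype κ] [Nonempty κ] {γ r : κ → ℝ}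

theorem sum_mul_exp_neg_le (hγ : ∀ g, 0 ≤ γ g) :
    ∑ g, γ g * exp (-r g) ≤ (∑ g, γ g) * exp (-univ.inf' univ_nonempty r) := by
  rw [sum_mul]
  gcongr with g
  · exact hγ g
  · exact inf'_le _ (mem_univ g)

theorem inf'_mul_exp_neg_le_sum (hγ : ∀ g, 0 ≤ γ g) :
    univ.inf' univ_nonempty γ * exp (-univ.inf' univ_nonempty r) ≤ ∑ g, γ g * exp (-r g) := by
  obtain ⟨g₀, -, hg₀⟩ := exists_mem_eq_inf' univ_nonempty r
  calc univ.inf' univ_nonempty γ * exp (-univ.inf' univ_nonempty r)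
      ≤ γ g₀ * exp (-r g₀) := by
        rw [hg₀]
        gcongr
        exact inf'_le _ (mem_univ g₀)
    _ ≤ ∑ g, γ g * exp (-r g) :=
        single_le_sum (f := fun g => γ g * exp (-r g))
          (fun g _ => mul_nonneg (hγ g) (exp_pos _).le) (mem_univ g₀)

theorem sum_mul_exp_neg_div_le {κ' : Type*} [Fintype κ'] [Nonempty κ'] {γ' r' : κ' → ℝ}
    (hγ : ∀ g, 0 < γ g) (hγ' : ∀ g, 0 ≤ γ' g) :
    (∑ g, γ' g * exp (-r' g)) / ∑ g, γ g * exp (-r g) ≤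
      (∑ g, γ' g) / univ.inf' univ_nonempty γ *
        exp (-(univ.inf' univ_nonempty r' - univ.inf' univ_nonempty r)) := by
  have hγmin : 0 < univ.inf' univ_nonempty γ := (lt_inf'_iff _).2 fun g _ => hγ g
  calc (∑ g, γ' g * exp (-r' g)) / ∑ g, γ g * exp (-r g)
      ≤ (∑ g, γ' g) * exp (-univ.inf' univ_nonempty r') /
          (univ.inf' univ_nonempty γ * exp (-univ.inf' univ_nonempty r)) :=
        div_le_div₀ (mul_nonneg (sum_nonneg fun g _ => hγ' g) (exp_pos _).le)
          (sum_mul_exp_neg_le hγ') (mul_pos hγmin (exp_pos _))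
          (inf'_mul_exp_neg_le_sum fun g => (hγ g).le)
    _ = _ := by
        rw [mul_div_mul_comm, ← exp_sub, neg_sub, neg_sub_neg]

end WeightedExpSum

theorem tendsto_sum_mul_exp_neg_div_sum_mul_exp_neg {α κ κ' : Type*} [Fintype κ] [Nonempty κ]
    [Fintype κ'] [Nonempty κ'] {l : Filter α} {γ : κ → ℝ} {γ' : κ' → ℝ} {r : κ → α → ℝ}
    {r' : κ' → α → ℝ} (hγ : ∀ g, 0 < γ g) (hγ' : ∀ g, 0 ≤ γ' g)
    (h : Tendsto (fun x => univ.inf' univ_nonempty (fun g => r' g x)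
      - univ.inf' univ_nonempty (fun g => r g x)) l atTop) :
    Tendsto (fun x => (∑ g, γ' g * exp (-r' g x)) / ∑ g, γ g * exp (-r g x)) l (𝓝 0) := by
  have hbound := (tendsto_exp_atBot.comp (tendsto_neg_atTop_atBot.comp h)).const_mul
    ((∑ g, γ' g) / univ.inf' univ_nonempty γ)
  rw [mul_zero] at hbound
  refine squeeze_zero (fun x => ?_) (fun x => sum_mul_exp_neg_div_le hγ hγ') hbound
  exact div_nonneg (sum_nonneg fun g _ => mul_nonneg (hγ' g) (exp_pos _).le)
    (sum_nonneg fun g _ => mul_nonneg (hγ g).le (exp_pos _).le)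

theorem tendsto_sum_div_sum_of_tendsto_div_zero {ι α : Type*} [Fintype ι] [DecidableEq ι]
    {l : Filter α} {f : ι → α → ℝ} (hf : ∀ i x, 0 < f i x) {A : Finset ι} {i₀ : ι}
    (h : ∀ j ∉ A, Tendsto (fun x => f j x / f i₀ x) l (𝓝 0)) :
    Tendsto (fun x => ∑ i ∈ A, f i x / ∑ i, f i x) l (𝓝 1) := by
  have htotal : ∀ x, 0 < ∑ i, f i x := fun x => sum_pos (fun i _ => hf i x) ⟨i₀, mem_univ _⟩
  have hsplit : ∀ x, ∑ i ∈ A, f i x / ∑ i, f i x = 1 - ∑ j ∈ Aᶜ, f j x / ∑ i, f i x := by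
    intro x
    rw [eq_sub_iff_add_eq, ← sum_div, ← sum_div, ← add_div, sum_add_sum_compl,
      div_self (htotal x).ne']
  have hout : ∀ j ∈ Aᶜ, Tendsto (fun x => f j x / ∑ i, f i x) l (𝓝 0) := by
    intro j hj
    refine squeeze_zero (fun x => (div_pos (hf j x) (htotal x)).le) (fun x => ?_)
      (h j (mem_compl.1 hj))
    exact div_le_div_of_nonneg_left (hf j x).le (hf i₀ x)
      (single_le_sum (fun i _ => (hf i x).le) (mem_univ i₀))
  simp only [hsplit]
  simpa using (tendsto_finsetSum _ hout).const_sub 1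

theorem stmt2_general {S : Type*} [Fintype S]
    (Sr : Finset S) (hSr : Sr.Nonempty)
    (G : S → Type*) [∀ s, Fintype (G s)] [∀ s, Nonempty (G s)]
    (γ : (s : S) → G s → ℝ) (hγ : ∀ s g, 0 < γ s g ∧ γ s g < 1)
    (r : (s : S) → G s → ℝ → ℝ)
    (hdiv : ∀ s ∈ Sr, ∀ s' ∉ Sr,
      Tendsto
        (fun ε : ℝ =>
          (Finset.univ.inf' Finset.univ_nonempty fun g : G s' => r s' g ε)
            - (Finset.univ.inf' Finset.univ_nonempty fun g : G s => r s g ε))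
        (nhdsWithin 0 (Set.Ioi 0)) atTop) :
    Tendsto
      (fun ε : ℝ => ∑ s ∈ Sr,
        (∑ g : G s, γ s g * Real.exp (-(r s g ε))) /
          (∑ s' : S, ∑ g : G s', γ s' g * Real.exp (-(r s' g ε))))
      (nhdsWithin 0 (Set.Ioi 0)) (nhds 1) := by
  classical
  obtain ⟨s₀, hs₀⟩ := hSr
  refine tendsto_sum_div_sum_of_tendsto_div_zero (i₀ := s₀)
    (fun s ε => sum_pos (fun g _ => mul_pos (hγ s g).1 (exp_pos _)) univ_nonempty)
    fun s' hs' => ?_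
  exact tendsto_sum_mul_exp_neg_div_sum_mul_exp_neg (fun g => (hγ s₀ g).1)
    (fun g => (hγ s' g).1.le) (hdiv s₀ hs₀ s' hs')

/-- Stochastic-stability selection: if for every `s ∈ Sr` and `s' ∉ Sr` the difference
of minimum resistances `r*_{s'}(ε) − r*_s(ε)` tends to `+∞` as `ε → 0⁺`, then the
stationary mass `∑_{s ∈ Sr} π_s(ε)` tends to `1`, where
`π_s(ε) = R_s(ε)/∑_{s'} R_{s'}(ε)` and `R_s(ε) = ∑_{g ∈ G_s} γ_{s,g}·exp(−r_{s,g}(ε))`. -/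
theorem stmt2 {S : Type*} [Fintype S] [DecidableEq S]
    (Sr : Finset S) (hSr : Sr.Nonempty)
    (G : S → Type*) [∀ s, Fintype (G s)] [∀ s, Nonempty (G s)]
    (γ : (s : S) → G s → ℝ) (hγ : ∀ s g, 0 < γ s g ∧ γ s g < 1)
    (r : (s : S) → G s → ℝ → ℝ) (hr : ∀ s g ε, 0 < ε → 0 ≤ r s g ε)
    (hdiv : ∀ s ∈ Sr, ∀ s' ∉ Sr,
      Tendsto
        (fun ε : ℝ =>
          (Finset.univ.inf' Finset.univ_nonempty fun g : G s' => r s' g ε)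
            - (Finset.univ.inf' Finset.univ_nonempty fun g : G s => r s g ε))
        (nhdsWithin 0 (Set.Ioi 0)) atTop) :
    Tendsto
      (fun ε : ℝ => ∑ s ∈ Sr,
        (∑ g : G s, γ s g * Real.exp (-(r s g ε))) /
          (∑ s' : S, ∑ g : G s', γ s' g * Real.exp (-(r s' g ε))))
      (nhdsWithin 0 (Set.Ioi 0)) (nhds 1) :=
  stmt2_general Sr hSr G γ hγ r hdiv
end

section
/- Let p be a real-valued function differentiable on an open interval containing [b, a], with p'(v) < 0 for all v in that interval and with p' strictly increasing on that interval. If b < c < a, b < d < a, and a + b < c + d, then p(a) + p(b) > p(c) + p(d). -/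
/-!
On `(l, r)` the function `p` is strictly convex (its derivative increases) and strictly
decreasing (its derivative is negative). Reflecting `c` in the midpoint of `[b, a]` gives
`e = a + b - c`, with `b < e < a` and `e < d`. Strict convexity gives
`p c + p e < p a + p b`, since `{c, e}` is strictly majorised by `{b, a}`, and monotonicity
gives `p d < p e`.
-/

open Set

section Convexity

variable {𝕜 : Type*} [Field 𝕜] [LinearOrder 𝕜] [IsStrictOrderedRing 𝕜] {s : Set 𝕜} {f : 𝕜 → 𝕜}

theorem StrictConvexOn.map_add_map_lt_of_add_eq (hf : StrictConvexOn 𝕜 s f) {x y z w : 𝕜}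
    (hx : x ∈ s) (hz : z ∈ s) (hxy : x < y) (hyz : y < z) (hw : y + w = x + z) :
    f y + f w < f x + f z := by
  have hy := hf.secant_strict_mono_aux1 hx hz hxy hyz
  have hw' := hf.secant_strict_mono_aux1 hx hz (x := x) (y := w) (by linarith) (by linarith)
  have hxz : 0 < z - x := by linarith
  rw [show w = x + z - y by linarith] at hw' ⊢
  nlinarith

theorem StrictConvexOn.map_add_map_lt_of_add_lt (hf : StrictConvexOn 𝕜 s f)
    (hf' : StrictAntiOn f s) {x y z w : 𝕜} (hx : x ∈ s) (hz : z ∈ s) (hw : w ∈ s)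
    (hxy : x < y) (hyz : y < z) (hsum : x + z < y + w) :
    f y + f w < f x + f z := by
  have hmem : x + z - y ∈ s := hf.1.ordConnected.out hx hz ⟨by linarith, by linarith⟩
  have hanti : f w < f (x + z - y) := hf' hmem hw (by linarith)
  linarith [hf.map_add_map_lt_of_add_eq hx hz hxy hyz (add_sub_cancel y (x + z))]

end Convexity

section Derivative

variable {s : Set ℝ} {p p' : ℝ → ℝ}

theorem strictConvexOn_of_hasDerivAt_of_strictMonoOn (hs : Convex ℝ s) (hso : IsOpen s)
    (hderiv : ∀ x ∈ s, HasDerivAt p (p' x) x) (hmono : StrictMonoOn p' s) :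
    StrictConvexOn ℝ s p := by
  refine StrictMonoOn.strictConvexOn_of_deriv hs
    (fun x hx => (hderiv x hx).continuousAt.continuousWithinAt) ?_
  rw [hso.interior_eq]
  exact hmono.congr fun x hx => ((hderiv x hx).deriv).symm

theorem strictAntiOn_of_hasDerivAt_of_neg (hs : Convex ℝ s) (hso : IsOpen s)
    (hderiv : ∀ x ∈ s, HasDerivAt p (p' x) x) (hneg : ∀ x ∈ s, p' x < 0) :
    StrictAntiOn p s := by
  refine strictAntiOn_of_deriv_neg hs
    (fun x hx => (hderiv x hx).continuousAt.continuousWithinAt) fun x hx => ?_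
  rw [hso.interior_eq] at hx
  exact (hderiv x hx).deriv ▸ hneg x hx

end Derivative

/-- If `p` is differentiable on an open interval containing `[b,a]`, with `p' < 0`
and `p'` strictly increasing there, and `b < c < a`, `b < d < a`, `a + b < c + d`,
then `p(a) + p(b) > p(c) + p(d)`. -/
theorem stmt3 (p p' : ℝ → ℝ) (l r a b c d : ℝ)
    (hsub : Set.Icc b a ⊆ Set.Ioo l r)
    (hderiv : ∀ x ∈ Set.Ioo l r, HasDerivAt p (p' x) x)
    (hneg : ∀ x ∈ Set.Ioo l r, p' x < 0)
    (hmono : StrictMonoOn p' (Set.Ioo l r))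
    (hbc : b < c) (hca : c < a) (hbd : b < d) (hda : d < a)
    (hsum : a + b < c + d) :
    p c + p d < p a + p b := by
  have hconv := strictConvexOn_of_hasDerivAt_of_strictMonoOn (convex_Ioo l r) isOpen_Ioo
    hderiv hmono
  have hanti := strictAntiOn_of_hasDerivAt_of_neg (convex_Ioo l r) isOpen_Ioo hderiv hneg
  have hba : b ≤ a := (hbc.trans hca).le
  have hb := hsub (left_mem_Icc.2 hba)
  have ha := hsub (right_mem_Icc.2 hba)
  have hd := hsub ⟨hbd.le, hda.le⟩
  linarith [hconv.map_add_map_lt_of_add_lt hanti hb ha hd hbc hca (by linarith)]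
end

section
/- Let u > 0 and δ ∈ (0,1). For ε ∈ (0, 1/u) set H(ε) = 1 − εu and N(ε) = ⌈log δ / log H(ε)⌉. Then lim_{ε→0+} εu · Σ_{t=1}^{N(ε)} log(1 − H(ε)^t) = − Σ_{ℓ=1}^∞ (1 − δ^ℓ)/ℓ², the series on the right being convergent. -/
/-!
Expanding `log (1 - x) = -∑ x^(ℓ+1) / (ℓ+1)` and exchanging the two sums writes
`(1 - H) ∑_{t=1}^N log (1 - H^t)` as `-∑_ℓ logSumCoeff H N ℓ`, and summing the geometric
series in `t` gives
`logSumCoeff H N ℓ = H^(ℓ+1) (1 - (H^N)^(ℓ+1)) / ((ℓ+1) (1 + H + ⋯ + H^ℓ))`.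
As `H = 1 - εu → 1`, the choice of `N` traps `H^N` in `[H δ, δ]`, hence `H^N → δ`, so each
coefficient tends to `(1 - δ^(ℓ+1)) / (ℓ+1)²`; the uniform bound `1 / (ℓ+1)²` lets Tannery's
theorem (dominated convergence for series) pass to the limit under the sum.
-/

open Filter Finset Topology

lemma one_sub_mul_sum_Icc_pow (y : ℝ) (N : ℕ) :
    (1 - y) * ∑ t ∈ Icc 1 N, y ^ t = y * (1 - y ^ N) := by
  induction N with
  | zero => simp
  | succ N ih => rw [sum_Icc_succ_top (by omega), mul_add, ih]; ring

lemma summable_one_div_succ_sq : Summable fun ℓ : ℕ => 1 / ((ℓ : ℝ) + 1) ^ 2 := by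
  simpa using (summable_nat_add_iff 1).mpr (Real.summable_one_div_nat_pow.mpr one_lt_two)

lemma summable_one_sub_pow_succ_div_sq {δ : ℝ} (hδ0 : 0 ≤ δ) (hδ1 : δ ≤ 1) :
    Summable fun ℓ : ℕ => (1 - δ ^ (ℓ + 1)) / ((ℓ : ℝ) + 1) ^ 2 :=
  summable_one_div_succ_sq.of_nonneg_of_le
    (fun ℓ => div_nonneg (by linarith [pow_le_one₀ hδ0 hδ1 (n := ℓ + 1)]) (by positivity))
    (fun ℓ => div_le_div_of_nonneg_right (by linarith [pow_nonneg hδ0 (ℓ + 1)]) (by positivity))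

noncomputable def logSumCoeff (H : ℝ) (N ℓ : ℕ) : ℝ :=
  (1 - H) * ∑ t ∈ Icc 1 N, (H ^ t) ^ (ℓ + 1) / ((ℓ : ℝ) + 1)

lemma mul_sum_log_one_sub_pow_eq_neg_tsum {H : ℝ} (hH0 : 0 < H) (hH1 : H < 1) (N : ℕ) :
    (1 - H) * ∑ t ∈ Icc 1 N, Real.log (1 - H ^ t) = -∑' ℓ, logSumCoeff H N ℓ := by
  have hlog : ∀ t ∈ Icc 1 N,
      HasSum (fun ℓ : ℕ => (H ^ t) ^ (ℓ + 1) / ((ℓ : ℝ) + 1)) (-Real.log (1 - H ^ t)) := by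
    intro t ht
    refine Real.hasSum_pow_div_log_of_abs_lt_one ?_
    rw [abs_of_pos (pow_pos hH0 t)]
    exact pow_lt_one₀ hH0.le hH1 (by grind)
  simp only [logSumCoeff, tsum_mul_left]
  rw [Summable.tsum_finsetSum fun t ht => (hlog t ht).summable,
    sum_congr rfl fun t ht => (hlog t ht).tsum_eq, sum_neg_distrib, mul_neg, neg_neg]

lemma logSumCoeff_eq {H : ℝ} (hH : 0 ≤ H) (N ℓ : ℕ) :
    logSumCoeff H N ℓ =
      H ^ (ℓ + 1) * (1 - (H ^ N) ^ (ℓ + 1)) /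
        (((ℓ : ℝ) + 1) * ∑ j ∈ range (ℓ + 1), H ^ j) := by
  have hG : 0 < ∑ j ∈ range (ℓ + 1), H ^ j := geom_sum_pos hH ℓ.succ_ne_zero
  have hgeom := one_sub_mul_sum_Icc_pow (H ^ (ℓ + 1)) N
  rw [← mul_neg_geom_sum] at hgeom
  rw [eq_div_iff (by positivity), logSumCoeff, ← sum_div, pow_right_comm, ← hgeom]
  simp only [← pow_mul, mul_comm _ (ℓ + 1)]
  field_simp

lemma norm_logSumCoeff_le {H : ℝ} (hH0 : 0 ≤ H) (hH1 : H ≤ 1) (N ℓ : ℕ) :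
    ‖logSumCoeff H N ℓ‖ ≤ 1 / ((ℓ : ℝ) + 1) ^ 2 := by
  have hnonneg : 0 ≤ logSumCoeff H N ℓ :=
    mul_nonneg (sub_nonneg.mpr hH1) (sum_nonneg fun _ _ => by positivity)
  have hnum : H ^ (ℓ + 1) * (1 - (H ^ N) ^ (ℓ + 1)) ≤ H ^ ℓ :=
    calc H ^ (ℓ + 1) * (1 - (H ^ N) ^ (ℓ + 1))
        ≤ H ^ (ℓ + 1) := mul_le_of_le_one_right (by positivity) (sub_le_self _ (by positivity))
      _ ≤ H ^ ℓ := pow_le_pow_of_le_one hH0 hH1 ℓ.le_succ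
  have hG : ((ℓ : ℝ) + 1) * H ^ ℓ ≤ ∑ j ∈ range (ℓ + 1), H ^ j := by
    simpa using card_nsmul_le_sum (range (ℓ + 1)) (H ^ ·) (H ^ ℓ)
      fun j hj => pow_le_pow_of_le_one hH0 hH1 (Nat.lt_succ_iff.mp (mem_range.mp hj))
  rw [Real.norm_eq_abs, abs_of_nonneg hnonneg, logSumCoeff_eq hH0,
    div_le_div_iff₀ (mul_pos (by positivity) (geom_sum_pos hH0 ℓ.succ_ne_zero)) (by positivity)]
  calc H ^ (ℓ + 1) * (1 - (H ^ N) ^ (ℓ + 1)) * ((ℓ : ℝ) + 1) ^ 2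
      ≤ H ^ ℓ * ((ℓ : ℝ) + 1) ^ 2 := by gcongr
    _ = ((ℓ : ℝ) + 1) * (((ℓ : ℝ) + 1) * H ^ ℓ) := by ring
    _ ≤ 1 * (((ℓ : ℝ) + 1) * ∑ j ∈ range (ℓ + 1), H ^ j) := by rw [one_mul]; gcongr

lemma tendsto_logSumCoeff {α : Type*} {l : Filter α} {H : α → ℝ} {N : α → ℕ} {δ : ℝ}
    (hH : Tendsto H l (𝓝 1)) (hHN : Tendsto (fun a => H a ^ N a) l (𝓝 δ)) (ℓ : ℕ) :
    Tendsto (fun a => logSumCoeff (H a) (N a) ℓ) l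
      (𝓝 ((1 - δ ^ (ℓ + 1)) / ((ℓ : ℝ) + 1) ^ 2)) := by
  have hclosed : Tendsto (fun a => H a ^ (ℓ + 1) * (1 - (H a ^ N a) ^ (ℓ + 1)) /
      (((ℓ : ℝ) + 1) * ∑ j ∈ range (ℓ + 1), H a ^ j)) l
      (𝓝 (1 ^ (ℓ + 1) * (1 - δ ^ (ℓ + 1)) / (((ℓ : ℝ) + 1) * ∑ j ∈ range (ℓ + 1), 1 ^ j))) :=
    ((hH.pow _).mul (tendsto_const_nhds.sub (hHN.pow _))).div
      (tendsto_const_nhds.mul (tendsto_finsetSum _ fun j _ => hH.pow j)) (by positivity)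
  convert hclosed.congr' ?_ using 2
  · simp only [one_pow, sum_const, card_range, nsmul_eq_mul, mul_one, Nat.cast_add, Nat.cast_one]
    ring
  · filter_upwards [hH.eventually (lt_mem_nhds zero_lt_one)] with a ha
    exact (logSumCoeff_eq ha.le _ _).symm

lemma tendsto_mul_sum_log_one_sub_pow {α : Type*} {l : Filter α} {H : α → ℝ} {N : α → ℕ}
    {δ : ℝ} (hH : Tendsto H l (𝓝[<] 1)) (hHN : Tendsto (fun a => H a ^ N a) l (𝓝 δ)) :
    Tendsto (fun a => (1 - H a) * ∑ t ∈ Icc 1 (N a), Real.log (1 - H a ^ t)) l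
      (𝓝 (-∑' ℓ : ℕ, (1 - δ ^ (ℓ + 1)) / ((ℓ : ℝ) + 1) ^ 2)) := by
  have hH_lim : Tendsto H l (𝓝 1) := tendsto_nhdsWithin_iff.mp hH |>.1
  have hH_mem : ∀ᶠ a in l, H a ∈ Set.Ioo 0 1 := hH (Ioo_mem_nhdsLT zero_lt_one)
  have hbound : ∀ᶠ a in l, ∀ ℓ, ‖logSumCoeff (H a) (N a) ℓ‖ ≤ 1 / ((ℓ : ℝ) + 1) ^ 2 := by
    filter_upwards [hH_mem] with a ha ℓ
    exact norm_logSumCoeff_le ha.1.le ha.2.le _ _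
  refine (tendsto_tsum_of_dominated_convergence summable_one_div_succ_sq
    (tendsto_logSumCoeff hH_lim hHN) hbound).neg.congr' ?_
  filter_upwards [hH_mem] with a ha
  exact (mul_sum_log_one_sub_pow_eq_neg_tsum ha.1 ha.2 _).symm

lemma pow_ceil_log_div_log_mem_Icc {δ H : ℝ} (hδ0 : 0 < δ) (hδ1 : δ < 1) (hH0 : 0 < H)
    (hH1 : H < 1) :
    H ^ ⌈Real.log δ / Real.log H⌉.toNat ∈ Set.Icc (H * δ) δ := by
  set r := Real.log δ / Real.log H
  have hr : H ^ r = δ := Real.rpow_logb hH0 hH1.ne hδ0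
  have hr0 : 0 < r := div_pos_of_neg_of_neg (Real.log_neg hδ0 hδ1) (Real.log_neg hH0 hH1)
  rw [Int.ceil_toNat, ← Real.rpow_natCast]
  constructor
  · calc H * δ = H ^ (r + 1) := by rw [Real.rpow_add_one hH0.ne', hr, mul_comm]
      _ ≤ H ^ (⌈r⌉₊ : ℝ) :=
        Real.rpow_le_rpow_of_exponent_ge hH0 hH1.le (Nat.ceil_lt_add_one hr0.le).le
  · exact hr ▸ Real.rpow_le_rpow_of_exponent_ge hH0 hH1.le (Nat.le_ceil r)

lemma tendsto_pow_ceil_log_div_log {δ : ℝ} (hδ0 : 0 < δ) (hδ1 : δ < 1) :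
    Tendsto (fun H : ℝ => H ^ ⌈Real.log δ / Real.log H⌉.toNat) (𝓝[<] 1) (𝓝 δ) := by
  have hmem : ∀ᶠ H in 𝓝[<] (1 : ℝ),
      H ^ ⌈Real.log δ / Real.log H⌉.toNat ∈ Set.Icc (H * δ) δ := by
    filter_upwards [Ioo_mem_nhdsLT zero_lt_one] with H hH
    exact pow_ceil_log_div_log_mem_Icc hδ0 hδ1 hH.1 hH.2
  have hlow : Tendsto (fun H : ℝ => H * δ) (𝓝[<] 1) (𝓝 δ) := by
    simpa using ((tendsto_id (x := 𝓝 (1 : ℝ))).mul_const δ).mono_left nhdsWithin_le_nhds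
  exact tendsto_of_tendsto_of_tendsto_of_le_of_le' hlow tendsto_const_nhds
    (hmem.mono fun _ h => h.1) (hmem.mono fun _ h => h.2)

/-- With `H(ε) = 1 − εu` and `N(ε) = ⌈log δ / log H(ε)⌉`,
`εu · ∑_{t=1}^{N(ε)} log(1 − H(ε)^t) → −∑_{ℓ=1}^∞ (1 − δ^ℓ)/ℓ²` as `ε → 0⁺`,
the series on the right being convergent. -/
theorem stmt6 (u δ : ℝ) (hu : 0 < u) (hδ0 : 0 < δ) (hδ1 : δ < 1) :
    Summable (fun ℓ : ℕ => (1 - δ ^ (ℓ + 1)) / ((ℓ : ℝ) + 1) ^ 2) ∧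
    Tendsto
      (fun ε : ℝ => ε * u *
        ∑ t ∈ Finset.Icc 1 (⌈Real.log δ / Real.log (1 - ε * u)⌉.toNat),
          Real.log (1 - (1 - ε * u) ^ t))
      (nhdsWithin 0 (Set.Ioi 0))
      (nhds (-(∑' ℓ : ℕ, (1 - δ ^ (ℓ + 1)) / ((ℓ : ℝ) + 1) ^ 2))) := by
  refine ⟨summable_one_sub_pow_succ_div_sq hδ0.le hδ1.le, ?_⟩
  have hH : Tendsto (fun ε : ℝ => 1 - ε * u) (𝓝[>] 0) (𝓝[<] 1) := by
    refine tendsto_nhdsWithin_iff.mpr ⟨?_, ?_⟩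
    · have : Continuous fun ε : ℝ => 1 - ε * u := by fun_prop
      simpa using (this.tendsto 0).mono_left nhdsWithin_le_nhds
    · filter_upwards [self_mem_nhdsWithin] with ε (hε : 0 < ε)
      simpa using mul_pos hε hu
  convert tendsto_mul_sum_log_one_sub_pow hH ((tendsto_pow_ceil_log_div_log hδ0 hδ1).comp hH)
    using 2
  ring
end

section
/- Let ε > 0, let L, U be reals with 0 < εL ≤ εU < 1, and let δ ∈ (0,1). Let φ : ℕ → ℝ satisfy L ≤ φ(t) ≤ U for all t, and let x : ℕ → ℝ satisfy x(0) = 0 and x(t+1) = x(t) + ε·φ(t)·(1 − x(t)). Then: (i) every t ∈ ℕ with x(t) > 1 − δ satisfies t ≥ ⌈log δ / log(1 − εU)⌉; and (ii) x(t) ≥ 1 − δ for every t ≥ ⌈log δ / log(1 − εL)⌉. In particular the first time x exceeds the level 1 − δ lies between ⌈log δ / log(1 − εU)⌉ and ⌈log δ / log(1 − εL)⌉. -/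
/-!
The distance to the target, `1 - x t`, is multiplied at each step by `1 - ε φ t ∈ [1 - εU, 1 - εL]`,
so it is squeezed between `(1 - εU) ^ t` and `(1 - εL) ^ t`. Taking logarithms (both bases lie in
`(0, 1)`, so the logarithms are negative) turns `r ^ t ≤ δ` into `log δ / log r ≤ t`.
-/

open Finset Real

theorem one_sub_eq_prod_range_of_succ_eq {R : Type*} [CommRing R] {c x : ℕ → R}
    (hx0 : x 0 = 0) (hrec : ∀ t, x (t + 1) = x t + c t * (1 - x t)) (t : ℕ) :
    1 - x t = ∏ i ∈ range t, (1 - c i) :=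
  (prod_range_induction _ (fun t => 1 - x t) (by simp [hx0]) t
    (fun k _ => by rw [hrec k]; ring)).symm

theorem pow_le_prod_range_and_prod_range_le_pow {R : Type*} [CommSemiring R] [PartialOrder R]
    [IsOrderedRing R] {a : ℕ → R} {b c : R} (hb : 0 ≤ b) (hba : ∀ t, b ≤ a t)
    (hac : ∀ t, a t ≤ c) (n : ℕ) :
    b ^ n ≤ ∏ t ∈ range n, a t ∧ ∏ t ∈ range n, a t ≤ c ^ n := by
  have ha : ∀ t, 0 ≤ a t := fun t => hb.trans (hba t)
  constructor
  · simpa using prod_le_prod (fun _ _ => hb) (fun t _ => hba t) (s := range n)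
  · simpa using prod_le_prod (fun t _ => ha t) (fun t _ => hac t) (s := range n)

theorem Real.ceil_log_div_log_le_iff_pow_le {r δ : ℝ} (hr0 : 0 < r) (hr1 : r < 1) (hδ : 0 < δ)
    (n : ℕ) : ⌈log δ / log r⌉ ≤ (n : ℤ) ↔ r ^ n ≤ δ := by
  rw [Int.ceil_le, Int.cast_natCast, div_le_iff_of_neg (log_neg hr0 hr1),
    pow_le_iff_le_log hr0 hδ, mul_comm]

theorem stmt9_general (ε L U δ : ℝ) (hε : 0 < ε)
    (hL0 : 0 < ε * L) (hLU : ε * L ≤ ε * U) (hU1 : ε * U < 1)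
    (hδ0 : 0 < δ)
    (φ x : ℕ → ℝ)
    (hφ : ∀ t, L ≤ φ t ∧ φ t ≤ U)
    (hx0 : x 0 = 0)
    (hrec : ∀ t, x (t + 1) = x t + ε * φ t * (1 - x t)) :
    (∀ t : ℕ, 1 - δ < x t → ⌈Real.log δ / Real.log (1 - ε * U)⌉ ≤ (t : ℤ)) ∧
    (∀ t : ℕ, ⌈Real.log δ / Real.log (1 - ε * L)⌉ ≤ (t : ℤ) → 1 - δ ≤ x t) := by
  have hU : 0 < 1 - ε * U := by linarith
  have hL : 0 < 1 - ε * L := by linarith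
  have hsqueeze (t : ℕ) : (1 - ε * U) ^ t ≤ 1 - x t ∧ 1 - x t ≤ (1 - ε * L) ^ t := by
    rw [one_sub_eq_prod_range_of_succ_eq hx0 hrec]
    refine pow_le_prod_range_and_prod_range_le_pow hU.le (fun i => ?_) (fun i => ?_) t
    · nlinarith [(hφ i).2]
    · nlinarith [(hφ i).1]
  refine ⟨fun t ht => ?_, fun t ht => ?_⟩
  · rw [ceil_log_div_log_le_iff_pow_le hU (by linarith) hδ0]
    linarith [(hsqueeze t).1]
  · rw [ceil_log_div_log_le_iff_pow_le hL (by linarith) hδ0] at ht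
    linarith [(hsqueeze t).2]

/-- Hitting-time bounds for the reinforcement recursion `x(t+1) = x(t) + ε·φ(t)·(1 − x(t))`,
`x(0) = 0`, with `L ≤ φ(t) ≤ U`, `0 < εL ≤ εU < 1` and `δ ∈ (0,1)`:
(i) any `t` with `x(t) > 1 − δ` satisfies `t ≥ ⌈log δ / log(1 − εU)⌉`, and
(ii) `x(t) ≥ 1 − δ` for every `t ≥ ⌈log δ / log(1 − εL)⌉`. -/
theorem stmt9 (ε L U δ : ℝ) (hε : 0 < ε)
    (hL0 : 0 < ε * L) (hLU : ε * L ≤ ε * U) (hU1 : ε * U < 1)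
    (hδ0 : 0 < δ) (hδ1 : δ < 1)
    (φ x : ℕ → ℝ)
    (hφ : ∀ t, L ≤ φ t ∧ φ t ≤ U)
    (hx0 : x 0 = 0)
    (hrec : ∀ t, x (t + 1) = x t + ε * φ t * (1 - x t)) :
    (∀ t : ℕ, 1 - δ < x t → ⌈Real.log δ / Real.log (1 - ε * U)⌉ ≤ (t : ℤ)) ∧
    (∀ t : ℕ, ⌈Real.log δ / Real.log (1 - ε * L)⌉ ≤ (t : ℤ) → 1 - δ ≤ x t) :=
  stmt9_general ε L U δ hε hL0 hLU hU1 hδ0 φ x hφ hx0 hrec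
end

section
/- Let a finite weakly acyclic strategic-form game be given. For every action profile α ∉ A_NE and every {α}-graph g on A all of whose edges are one-step transitions, there exist a pure Nash equilibrium α* ∈ A_NE and an {α*}-graph g* on A, all of whose edges are one-step transitions, such that the number of edges of g* that are not better-reply edges is strictly smaller than the number of edges of g that are not better-reply edges. -/
attribute [local instance] Classical.propDecidable

/-- `β` is a better reply of player `i` to `α`. -/
def BetterReply {I : Type*} {A : I → Type*} (u : (i : I) → ((j : I) → A j) → ℝ)
    (i : I) (α β : (j : I) → A j) : Prop :=
  (∀ j, j ≠ i → β j = α j) ∧ u i α < u i β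

/-- A pure Nash equilibrium: no player has a better reply. -/
def IsNashEq {I : Type*} {A : I → Type*} (u : (i : I) → ((j : I) → A j) → ℝ)
    (α : (j : I) → A j) : Prop :=
  ∀ i β, ¬ BetterReply u i α β

/-- `β` differs from `α` in the action of exactly one player. -/
def OneStep {I : Type*} {A : I → Type*} (α β : (j : I) → A j) : Prop :=
  ∃ i, β i ≠ α i ∧ ∀ j, j ≠ i → β j = α j

/-!
Follow an improvement path from `α` to a Nash equilibrium `α*` and re-root the graph along it:
when the root moves from `γ` to a better reply `δ` of `γ`, redirect the edge of `γ` to `δ`.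
Every other profile still reaches the new root, and no new non-better-reply edge appears.
At the end `α*` is the root, while in `g` the edge leaving `α*` cannot be a better reply
because `α*` is an equilibrium.
-/

section RootedGraph

variable {S : Type*}

/-- An `{r}`-graph on `S` all of whose edges satisfy `E`. -/
def IsRootedGraph (E : S → S → Prop) (g : S → S) (r : S) : Prop :=
  ∀ x, x ≠ r → E x (g x) ∧ ∃ n, g^[n] x = r

/-- The old path from `x` to `r` either meets `s` or ends at `r`, which now points to `s`. -/
lemma exists_iterate_update_eq [DecidableEq S] (g : S → S) (r s : S) {n : ℕ} {x : S}
    (hx : g^[n] x = r) : ∃ m, (Function.update g r s)^[m] x = s := by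
  induction n generalizing x with
  | zero =>
    subst hx
    exact ⟨1, by simp⟩
  | succ n ih =>
    by_cases hxs : x = s
    · exact ⟨0, hxs⟩
    by_cases hxr : x = r
    · exact ⟨1, by simp [hxr]⟩
    obtain ⟨m, hm⟩ := ih hx
    exact ⟨m + 1, by rwa [Function.iterate_succ_apply, Function.update_of_ne hxr]⟩

lemma IsRootedGraph.update [DecidableEq S] {E : S → S → Prop} {g : S → S} {r s : S}
    (hg : IsRootedGraph E g r) (hrs : E r s) :
    IsRootedGraph E (Function.update g r s) s := by
  intro x _
  by_cases hxr : x = r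
  · subst hxr
    exact ⟨by simpa using hrs, exists_iterate_update_eq g x s (n := 0) rfl⟩
  obtain ⟨hE, n, hn⟩ := hg x hxr
  exact ⟨by simpa [Function.update_of_ne hxr] using hE, exists_iterate_update_eq g r s hn⟩

theorem IsRootedGraph.exists_reroot [DecidableEq S] {E R : S → S → Prop}
    (hRE : ∀ x y, R x y → E x y) {g : S → S} {r r' : S} (hg : IsRootedGraph E g r)
    (hpath : Relation.ReflTransGen R r r') :
    ∃ g', IsRootedGraph E g' r' ∧
      ∀ x, x ≠ r' ∧ ¬ R x (g' x) → x ≠ r ∧ ¬ R x (g x) := by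
  induction hpath with
  | refl => exact ⟨g, hg, fun _ h => h⟩
  | @tail γ δ _ hγδ ih =>
    obtain ⟨g', hg', hbad⟩ := ih
    refine ⟨Function.update g' γ δ, hg'.update (hRE γ δ hγδ), fun x ⟨_, hR⟩ => ?_⟩
    by_cases hxγ : x = γ
    · subst hxγ
      exact absurd (by simpa using hγδ) hR
    rw [Function.update_of_ne hxγ] at hR
    exact hbad x ⟨hxγ, hR⟩

end RootedGraph

section Game

variable {I : Type*} {A : I → Type*}

lemma OneStep.ne {α β : (j : I) → A j} (h : OneStep α β) : β ≠ α := by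
  obtain ⟨i, hi, _⟩ := h
  exact fun hβα => hi (congrFun hβα i)

lemma BetterReply.oneStep {u : (i : I) → ((j : I) → A j) → ℝ} {i : I} {α β : (j : I) → A j}
    (h : BetterReply u i α β) : OneStep α β := by
  obtain ⟨hothers, hlt⟩ := h
  refine ⟨i, fun hi => hlt.ne ?_, hothers⟩
  have hβα : β = α := funext fun j => by
    by_cases hji : j = i
    · subst hji
      exact hi
    · exact hothers j hji
  rw [hβα]

end Game

theorem stmt12_general {I : Type*} [Fintype I] [DecidableEq I] {A : I → Type*}
    [∀ i, Fintype (A i)]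
    (u : (i : I) → ((j : I) → A j) → ℝ)
    (hwa : ∀ α : (j : I) → A j, ∃ β, Relation.ReflTransGen
        (fun x y => ∃ i, BetterReply u i x y) α β ∧ IsNashEq u β)
    (α : (j : I) → A j) (hα : ¬ IsNashEq u α)
    (g : ((j : I) → A j) → ((j : I) → A j))
    (hg : ∀ β, β ≠ α → (g β ≠ β ∧ OneStep β (g β) ∧ ∃ n : ℕ, g^[n] β = α)) :
    ∃ αstar, IsNashEq u αstar ∧
      ∃ gstar : ((j : I) → A j) → ((j : I) → A j),
        (∀ β, β ≠ αstar →
          (gstar β ≠ β ∧ OneStep β (gstar β) ∧ ∃ n : ℕ, gstar^[n] β = αstar)) ∧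
        (Finset.univ.filter
            (fun β => β ≠ αstar ∧ ¬ ∃ i, BetterReply u i β (gstar β))).card <
          (Finset.univ.filter
            (fun β => β ≠ α ∧ ¬ ∃ i, BetterReply u i β (g β))).card := by
  obtain ⟨αstar, hpath, hNE⟩ := hwa α
  have hg' : IsRootedGraph (fun x y => y ≠ x ∧ OneStep x y) g α := fun β hβ =>
    and_assoc.mpr (hg β hβ)
  obtain ⟨gstar, hgstar, hbad⟩ := hg'.exists_reroot
    (fun _ _ ⟨_, h⟩ => ⟨h.oneStep.ne, h.oneStep⟩) hpath
  refine ⟨αstar, hNE, gstar, fun β hβ => and_assoc.mp (hgstar β hβ), ?_⟩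
  refine Finset.card_lt_card ((Finset.ssubset_iff_of_subset ?_).mpr ⟨αstar, ?_, ?_⟩)
  · intro β
    simpa only [Finset.mem_filter, Finset.mem_univ, true_and] using hbad β
  · simp only [Finset.mem_filter, Finset.mem_univ, true_and]
    exact ⟨fun h => hα (h ▸ hNE), fun ⟨i, hbr⟩ => hNE i _ hbr⟩
  · simp

/-- In a finite weakly acyclic game, for every non-Nash profile `α` and every one-step
`{α}`-graph `g`, there are a pure Nash equilibrium `α*` and a one-step `{α*}`-graph `g*`
with strictly fewer non-better-reply edges than `g`. -/
theorem stmt12 {I : Type*} [Fintype I] [DecidableEq I] {A : I → Type*}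
    [∀ i, Fintype (A i)] [∀ i, Nonempty (A i)]
    (u : (i : I) → ((j : I) → A j) → ℝ)
    (hwa : ∀ α : (j : I) → A j, ∃ β, Relation.ReflTransGen
        (fun x y => ∃ i, BetterReply u i x y) α β ∧ IsNashEq u β)
    (α : (j : I) → A j) (hα : ¬ IsNashEq u α)
    (g : ((j : I) → A j) → ((j : I) → A j))
    (hg : ∀ β, β ≠ α → (g β ≠ β ∧ OneStep β (g β) ∧ ∃ n : ℕ, g^[n] β = α)) :
    ∃ αstar, IsNashEq u αstar ∧
      ∃ gstar : ((j : I) → A j) → ((j : I) → A j),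
        (∀ β, β ≠ αstar →
          (gstar β ≠ β ∧ OneStep β (gstar β) ∧ ∃ n : ℕ, gstar^[n] β = αstar)) ∧
        (Finset.univ.filter
            (fun β => β ≠ αstar ∧ ¬ ∃ i, BetterReply u i β (gstar β))).card <
          (Finset.univ.filter
            (fun β => β ≠ α ∧ ¬ ∃ i, BetterReply u i β (g β))).card :=
  stmt12_general u hwa α hα g hg
end

section
/- Every finite exact potential game is weakly acyclic: if there exists a function Φ : A → ℝ such that u_i(β) − u_i(α) = Φ(β) − Φ(α) whenever the action profiles α and β differ only in the action of player i, then from every action profile there is an improvement path ending at a pure Nash equilibrium; in particular, the game possesses at least one pure Nash equilibrium. -/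
/-!
Every better reply strictly increases the potential `Φ`. On a finite set of profiles a strictly
increasing walk cannot go on forever, so following better replies from any profile ends, after
finitely many steps, at a profile without better replies: a pure Nash equilibrium.
-/

namespace Relation

variable {α : Type*} {r : α → α → Prop}

theorem exists_reflTransGen_forall_not_of_wellFounded_swap (hr : WellFounded (Function.swap r))
    (a : α) : ∃ b, ReflTransGen r a b ∧ ∀ c, ¬ r b c := by
  induction a using hr.induction with
  | _ a ih =>
    by_cases hmax : ∀ c, ¬ r a c
    · exact ⟨a, .refl, hmax⟩
    · obtain ⟨c, hac⟩ := not_forall_not.mp hmax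
      obtain ⟨b, hcb, hb⟩ := ih c hac
      exact ⟨b, .head hac hcb, hb⟩

theorem wellFounded_swap_of_strictMono_potential [Finite α] {β : Type*} [Preorder β]
    (Φ : α → β) (hΦ : ∀ a b, r a b → Φ a < Φ b) : WellFounded (Function.swap r) := by
  have : IsTrans α (fun a b => Φ b < Φ a) := ⟨fun _ _ _ hab hbc => hbc.trans hab⟩
  have : Std.Irrefl (fun a b : α => Φ b < Φ a) := ⟨fun _ => lt_irrefl _⟩
  exact Subrelation.wf (fun {a b} hab => hΦ b a hab) (Finite.wellFounded_of_trans_of_irrefl _)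

end Relation

theorem BetterReply.potential_lt {I : Type*} {A : I → Type*} {u : (i : I) → ((j : I) → A j) → ℝ}
    {Φ : ((j : I) → A j) → ℝ}
    (hpot : ∀ (i : I) (α β : (j : I) → A j),
      (∀ j, j ≠ i → β j = α j) → u i β - u i α = Φ β - Φ α)
    {i : I} {α β : (j : I) → A j} (h : BetterReply u i α β) : Φ α < Φ β := by
  linarith [hpot i α β h.1, h.2]

theorem stmt13_general {I : Type*} [Fintype I] {A : I → Type*}
    [∀ i, Fintype (A i)] [∀ i, Nonempty (A i)]
    (u : (i : I) → ((j : I) → A j) → ℝ)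
    (Φ : ((j : I) → A j) → ℝ)
    (hpot : ∀ (i : I) (α β : (j : I) → A j),
      (∀ j, j ≠ i → β j = α j) → u i β - u i α = Φ β - Φ α) :
    (∀ α : (j : I) → A j, ∃ β, Relation.ReflTransGen
        (fun x y => ∃ i, BetterReply u i x y) α β ∧ IsNashEq u β) ∧
    (∃ α : (j : I) → A j, IsNashEq u α) := by
  have hwf : WellFounded (Function.swap fun x y => ∃ i, BetterReply u i x y) :=
    Relation.wellFounded_swap_of_strictMono_potential Φ fun _ _ ⟨_, h⟩ => h.potential_lt hpot
  have hpath (α : (j : I) → A j) : ∃ β, Relation.ReflTransGen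
      (fun x y => ∃ i, BetterReply u i x y) α β ∧ IsNashEq u β := by
    obtain ⟨β, hαβ, hβ⟩ := Relation.exists_reflTransGen_forall_not_of_wellFounded_swap hwf α
    exact ⟨β, hαβ, fun i γ hγ => hβ γ ⟨i, hγ⟩⟩
  obtain ⟨β, -, hβ⟩ := hpath (fun j => Classical.arbitrary (A j))
  exact ⟨hpath, β, hβ⟩

/-- Every finite exact potential game is weakly acyclic: from every action profile
there is an improvement path ending at a pure Nash equilibrium; in particular a pure
Nash equilibrium exists. -/
theorem stmt13 {I : Type*} [Fintype I] [DecidableEq I] {A : I → Type*}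
    [∀ i, Fintype (A i)] [∀ i, Nonempty (A i)]
    (u : (i : I) → ((j : I) → A j) → ℝ)
    (Φ : ((j : I) → A j) → ℝ)
    (hpot : ∀ (i : I) (α β : (j : I) → A j),
      (∀ j, j ≠ i → β j = α j) → u i β - u i α = Φ β - Φ α) :
    (∀ α : (j : I) → A j, ∃ β, Relation.ReflTransGen
        (fun x y => ∃ i, BetterReply u i x y) α β ∧ IsNashEq u β) ∧
    (∃ α : (j : I) → A j, IsNashEq u α) :=
  stmt13_general u Φ hpot
end

section
/- Let a > c > 0, d > b > 0 and a > d, and let p be a real-valued function differentiable on an open interval containing [min(b,c), a], with p'(v) < 0 for all v in that interval and with p' strictly increasing on that interval. Define the minimum resistances r_AA = min{p(a) + p(b) + p(d), 2·p(a) + p(b)}, r_AB = p(a) + p(b) + p(c), and r_BB = p(a) + p(c) + p(d). Then: (i) r_AA = 2·p(a) + p(b); (ii) r_AB > r_AA and r_AB > r_BB; (iii) if a − c < d − b then r_AA > r_BB (so (B,B) has the strictly smallest minimum resistance); (iv) if a − c ≥ d − b and c ≤ b then r_AA ≤ r_BB. -/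
/-! Since `p` is strictly decreasing, `p a` is the smallest of the four values, which gives
(i), (ii) and (iv) by comparing terms. For (iii), the hypothesis `a - c < d - b` forces
`b < c < a`, and `p` is convex because `p'` is increasing; convexity gives
`p c + p (a + b - c) ≤ p a + p b`, since `c` and `a + b - c` lie between `b` and `a` with
the same sum, while `d > a + b - c` makes `p d < p (a + b - c)`. -/

open Set

section IooDeriv

variable {f f' : ℝ → ℝ} {l r : ℝ}

lemma strictAntiOn_Ioo_of_hasDerivAt_neg (hf : ∀ x ∈ Ioo l r, HasDerivAt f (f' x) x)
    (hf' : ∀ x ∈ Ioo l r, f' x < 0) : StrictAntiOn f (Ioo l r) :=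
  strictAntiOn_of_hasDerivWithinAt_neg (convex_Ioo l r)
    (fun x hx => (hf x hx).continuousAt.continuousWithinAt)
    (by simpa only [interior_Ioo] using fun x hx => (hf x hx).hasDerivWithinAt)
    (by simpa only [interior_Ioo] using hf')

lemma strictConvexOn_Ioo_of_hasDerivAt_strictMonoOn (hf : ∀ x ∈ Ioo l r, HasDerivAt f (f' x) x)
    (hf' : StrictMonoOn f' (Ioo l r)) : StrictConvexOn ℝ (Ioo l r) f := by
  refine StrictMonoOn.strictConvexOn_of_deriv (convex_Ioo l r)
    (fun x hx => (hf x hx).continuousAt.continuousWithinAt) ?_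
  rw [interior_Ioo]
  exact hf'.congr (deriv_eqOn isOpen_Ioo fun x hx => (hf x hx).hasDerivWithinAt).symm

end IooDeriv

lemma ConvexOn.map_add_map_reflect_le {s : Set ℝ} {f : ℝ → ℝ} (hf : ConvexOn ℝ s f)
    {x y z : ℝ} (hx : x ∈ s) (hy : y ∈ s) (hz : z ∈ Icc x y) :
    f z + f (x + y - z) ≤ f x + f y := by
  obtain ⟨hxz, hzy⟩ := hz
  rcases hxz.eq_or_lt with rfl | hxz
  · simp
  set t := (y - z) / (y - x)
  have hxy : 0 < y - x := by linarith
  have ht0 : 0 ≤ t := div_nonneg (by linarith) hxy.le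
  have ht1 : t ≤ 1 := (div_le_one hxy).mpr (by linarith)
  have hty : t * (y - x) = y - z := div_mul_cancel₀ _ hxy.ne'
  have hz : f z ≤ t * f x + (1 - t) * f y := by
    simpa [smul_eq_mul, show t * x + (1 - t) * y = z by linarith] using
      hf.2 hx hy ht0 (sub_nonneg.mpr ht1) (by ring)
  have hw : f (x + y - z) ≤ (1 - t) * f x + t * f y := by
    simpa [smul_eq_mul, show (1 - t) * x + t * y = x + y - z by linarith] using
      hf.2 hx hy (sub_nonneg.mpr ht1) ht0 (by ring)
  linarith

theorem stmt19_general (a b c d : ℝ)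
    (hac : a > c) (hdb : d > b) (had : a > d)
    (p p' : ℝ → ℝ) (l r : ℝ)
    (hsub : Set.Icc (min b c) a ⊆ Set.Ioo l r)
    (hderiv : ∀ x ∈ Set.Ioo l r, HasDerivAt p (p' x) x)
    (hneg : ∀ x ∈ Set.Ioo l r, p' x < 0)
    (hmono : StrictMonoOn p' (Set.Ioo l r)) :
    (min (p a + p b + p d) (2 * p a + p b) = 2 * p a + p b) ∧
    (p a + p b + p c > min (p a + p b + p d) (2 * p a + p b)) ∧
    (p a + p b + p c > p a + p c + p d) ∧
    (a - c < d - b →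
      p a + p c + p d < min (p a + p b + p d) (2 * p a + p b)) ∧
    (a - c ≥ d - b → c ≤ b →
      min (p a + p b + p d) (2 * p a + p b) ≤ p a + p c + p d) := by
  have hmem : ∀ x, min b c ≤ x → x ≤ a → x ∈ Ioo l r := fun x h₁ h₂ => hsub ⟨h₁, h₂⟩
  have hbmem := hmem b (min_le_left _ _) (by linarith)
  have hcmem := hmem c (min_le_right _ _) hac.le
  have hdmem := hmem d ((min_le_left _ _).trans hdb.le) had.le
  have hamem := hmem a ((min_le_left _ _).trans (by linarith)) le_rfl
  have hanti := strictAntiOn_Ioo_of_hasDerivAt_neg hderiv hneg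
  have hpad : p a < p d := hanti hdmem hamem had
  have hpac : p a < p c := hanti hcmem hamem hac
  have hpdb : p d < p b := hanti hbmem hdmem hdb
  have hmin : min (p a + p b + p d) (2 * p a + p b) = 2 * p a + p b := min_eq_right (by linarith)
  refine ⟨hmin, by rw [hmin]; linarith, by linarith, fun hlt => ?_, fun _ hcb => ?_⟩
  · have hbc : b < c := by linarith
    have hemem := hmem (b + a - c) ((min_le_left _ _).trans (by linarith)) (by linarith)
    have hpde : p d < p (b + a - c) := hanti hemem hdmem (by linarith)
    have hconv := (strictConvexOn_Ioo_of_hasDerivAt_strictMonoOn hderiv hmono).convexOn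
    have hsum := hconv.map_add_map_reflect_le hbmem hamem ⟨hbc.le, hac.le⟩
    rw [hmin]
    linarith
  · have hpbc : p b ≤ p c := hanti.antitoneOn hcmem hbmem hcb
    rw [hmin]
    linarith

/-- Comparison of the minimum resistances of the pure strategy states in the 2×2
coordination game (`a > c > 0`, `d > b > 0`, `a > d`), where `p` is the one-step
transition resistance as a function of the destination payoff: a positive role is
played by `p` being strictly decreasing with strictly increasing derivative on an
open interval containing `[min b c, a]`. With
`r_AA = min(p a + p b + p d, 2·p a + p b)`, `r_AB = p a + p b + p c`,
`r_BB = p a + p c + p d`: (i) `r_AA = 2·p a + p b`; (ii) `r_AB > r_AA` and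
`r_AB > r_BB`; (iii) if `a − c < d − b` then `r_BB < r_AA`; (iv) if `a − c ≥ d − b`
and `c ≤ b` then `r_AA ≤ r_BB`. -/
theorem stmt19 (a b c d : ℝ)
    (hac : a > c) (hc : c > 0) (hdb : d > b) (hb : b > 0) (had : a > d)
    (p p' : ℝ → ℝ) (l r : ℝ)
    (hsub : Set.Icc (min b c) a ⊆ Set.Ioo l r)
    (hderiv : ∀ x ∈ Set.Ioo l r, HasDerivAt p (p' x) x)
    (hneg : ∀ x ∈ Set.Ioo l r, p' x < 0)
    (hmono : StrictMonoOn p' (Set.Ioo l r)) :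
    (min (p a + p b + p d) (2 * p a + p b) = 2 * p a + p b) ∧
    (p a + p b + p c > min (p a + p b + p d) (2 * p a + p b)) ∧
    (p a + p b + p c > p a + p c + p d) ∧
    (a - c < d - b →
      p a + p c + p d < min (p a + p b + p d) (2 * p a + p b)) ∧
    (a - c ≥ d - b → c ≤ b →
      min (p a + p b + p d) (2 * p a + p b) ≤ p a + p c + p d) :=
  stmt19_general a b c d hac hdb had p p' l r hsub hderiv hneg hmono
end
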